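/- Let P and Q be probability measures on a finite set X, let 0 < α < 1, and let G ⊆ X be a set such that P(x) ≥ (1−α)Q(x) for all x ∈ G. Define Z = (1/α)·(P(G) − (1−α)Q(G)) and suppose Z > 0. Define the probability measure E on X by E(x) = (1/(Zα))·(P(x) − (1−α)Q(x)) for x ∈ G and E(x) = 0 otherwise. Then E is a valid probability distribution (nonnegative, sums to 1), and the total variation distance between P and the mixture (1−α)Q + αE satisfies d_TV(P, (1−α)Q + αE) ≤ P(X∖G) + (1−α)Q(X∖G). -/

import Mathlib

/-- The adversarial corruption distribution `E` is valid and the mixture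
`(1−α)Q + αE` is close to `P` in total variation. -/
theorem stmt5 {X : Type*} [Fintype X] [DecidableEq X]
    (P Q : X → ℝ) (α : ℝ) (G : Finset X)
    (hP0 : ∀ x, 0 ≤ P x) (hQ0 : ∀ x, 0 ≤ Q x)
    (hP1 : ∑ x, P x = 1) (hQ1 : ∑ x, Q x = 1)
    (hα0 : 0 < α) (hα1 : α < 1)
    (hG : ∀ x ∈ G, (1 - α) * Q x ≤ P x)
    (Z : ℝ) (hZ : Z = (1 / α) * ((∑ x ∈ G, P x) - (1 - α) * ∑ x ∈ G, Q x))
    (hZpos : 0 < Z)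
    (E : X → ℝ)
    (hE : ∀ x, E x = if x ∈ G then (P x - (1 - α) * Q x) / (Z * α) else 0) :
    (∀ x, 0 ≤ E x) ∧ (∑ x, E x = 1) ∧
    (1 / 2) * ∑ x, |P x - ((1 - α) * Q x + α * E x)|
      ≤ (∑ x ∈ Gᶜ, P x) + (1 - α) * ∑ x ∈ Gᶜ, Q x := by
  have hZα : Z * α = ∑ x ∈ G, (P x - (1 - α) * Q x) := by
    rw [hZ, Finset.sum_sub_distrib, Finset.mul_sum]
    field_simp
  have hZαpos : 0 < Z * α := mul_pos hZpos hα0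
  have hEnn : ∀ x, 0 ≤ E x := by
    intro x
    rw [hE]
    split_ifs with h
    · exact div_nonneg (by linarith [hG x h]) hZαpos.le
    · exact le_refl 0
  have hEsum : ∑ x, E x = 1 := by
    simp only [hE]
    rw [Finset.sum_ite_mem, Finset.univ_inter, ← Finset.sum_div, ← hZα,
      div_self hZαpos.ne']
  refine ⟨hEnn, hEsum, ?_⟩
  set S1 := ∑ x ∈ Gᶜ, P x with hS1
  set S2 := ∑ x ∈ Gᶜ, Q x with hS2
  have hS1nn : 0 ≤ S1 := Finset.sum_nonneg fun x _ => hP0 x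
  have hS2nn : 0 ≤ S2 := Finset.sum_nonneg fun x _ => hQ0 x
  have hPsplit : ∑ x ∈ G, P x + S1 = 1 := by
    rw [hS1, Finset.sum_add_sum_compl, hP1]
  have hQsplit : ∑ x ∈ G, Q x + S2 = 1 := by
    rw [hS2, Finset.sum_add_sum_compl, hQ1]
  have hkey : Z * α - α = (1 - α) * S2 - S1 := by
    have : Z * α = (1 - S1) - (1 - α) * (1 - S2) := by
      rw [hZα, Finset.sum_sub_distrib, ← Finset.mul_sum]
      nlinarith [hPsplit, hQsplit]
    linarith
  have hsplitsum :
      ∑ x, |P x - ((1 - α) * Q x + α * E x)|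
        = ∑ x ∈ G, |P x - ((1 - α) * Q x + α * E x)|
          + ∑ x ∈ Gᶜ, |P x - ((1 - α) * Q x + α * E x)| :=
    (Finset.sum_add_sum_compl G _).symm
  have hGsum : ∑ x ∈ G, |P x - ((1 - α) * Q x + α * E x)| ≤ S1 + (1 - α) * S2 := by
    have heq : ∀ x ∈ G, |P x - ((1 - α) * Q x + α * E x)|
        = (P x - (1 - α) * Q x) * |1 - 1 / Z| := by
      intro x hx
      rw [hE x, if_pos hx]
      have h1 : P x - ((1 - α) * Q x + α * ((P x - (1 - α) * Q x) / (Z * α)))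
          = (P x - (1 - α) * Q x) * (1 - 1 / Z) := by
        field_simp
        ring
      rw [h1, abs_mul, abs_of_nonneg (by linarith [hG x hx])]
    rw [Finset.sum_congr rfl heq, ← Finset.sum_mul, ← hZα]
    have h2 : Z * α * |1 - 1 / Z| = |Z * α - α| := by
      rw [show Z * α - α = Z * α * (1 - 1 / Z) by field_simp, abs_mul,
        abs_of_pos hZαpos]
    rw [h2, hkey]
    have h3 : 0 ≤ (1 - α) * S2 := mul_nonneg (by linarith) hS2nn
    exact abs_le.mpr ⟨by linarith, by linarith⟩
  have hGcsum : ∑ x ∈ Gᶜ, |P x - ((1 - α) * Q x + α * E x)| ≤ S1 + (1 - α) * S2 := by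
    have : ∑ x ∈ Gᶜ, |P x - ((1 - α) * Q x + α * E x)|
        ≤ ∑ x ∈ Gᶜ, (P x + (1 - α) * Q x) := by
      apply Finset.sum_le_sum
      intro x hx
      rw [hE x, if_neg (by simpa using hx)]
      rw [mul_zero, add_zero]
      have := hP0 x; have := hQ0 x
      rw [abs_le]
      constructor <;> nlinarith
    rwa [Finset.sum_add_distrib, ← Finset.mul_sum] at this
  rw [hsplitsum]
  linarith
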